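/- arXiv:0905.3434 — 4 statements merged into one kernel-verified Lean document; each statement's English description precedes it below -/
import Mathlib

section
/- (Lemma 3.2) Fix an m×n complex matrix H, an m×m complex Hermitian positive semidefinite matrix M, and P > 0, and let ℱ = {S : S is an n×n Hermitian PSD matrix with trace(S) ≤ P}. Suppose S_JD ∈ ℱ maximizes S ↦ lndet(I + H S Hᴴ + M) over ℱ, and S_SD ∈ ℱ maximizes S ↦ lndet(I + H S Hᴴ) over ℱ. Then lndet(I + H S_JD Hᴴ + M) − lndet(I + H S_JD Hᴴ) ≥ lndet(I + H S_SD Hᴴ + M) − lndet(I + H S_SD Hᴴ); that is, the threshold rate R̄₂⁽ᵃ⁾ defined with the sum-capacity-optimal covariance is at least the threshold rate R̂₂⁽ᵃ⁾ defined with the single-user-capacity-optimal covariance. -/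
open Matrix
open scoped ComplexOrder

/-- Lemma 3.2: If S_JD maximizes lndet(I+HSHᴴ+M) and S_SD maximizes
lndet(I+HSHᴴ) over ℱ = {S PSD : tr(S) ≤ P}, then R̄₂⁽ᵃ⁾ ≥ R̂₂⁽ᵃ⁾, i.e.
lndet(I+HS_JDHᴴ+M) − lndet(I+HS_JDHᴴ) ≥ lndet(I+HS_SDHᴴ+M) − lndet(I+HS_SDHᴴ). -/
theorem threshold_rate_ineq {m n : ℕ}
    (H : Matrix (Fin m) (Fin n) ℂ) (M : Matrix (Fin m) (Fin m) ℂ)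
    (hM : M.PosSemidef) (P : ℝ) (hP : 0 < P)
    (S_JD S_SD : Matrix (Fin n) (Fin n) ℂ)
    (hJDfeas : S_JD.PosSemidef ∧ S_JD.trace.re ≤ P)
    (hSDfeas : S_SD.PosSemidef ∧ S_SD.trace.re ≤ P)
    (hJDopt : ∀ S : Matrix (Fin n) (Fin n) ℂ, S.PosSemidef → S.trace.re ≤ P →
      Real.log ((1 + H * S * Hᴴ + M).det.re) ≤ Real.log ((1 + H * S_JD * Hᴴ + M).det.re))
    (hSDopt : ∀ S : Matrix (Fin n) (Fin n) ℂ, S.PosSemidef → S.trace.re ≤ P →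
      Real.log ((1 + H * S * Hᴴ).det.re) ≤ Real.log ((1 + H * S_SD * Hᴴ).det.re)) :
    Real.log ((1 + H * S_SD * Hᴴ + M).det.re) - Real.log ((1 + H * S_SD * Hᴴ).det.re) ≤
      Real.log ((1 + H * S_JD * Hᴴ + M).det.re) - Real.log ((1 + H * S_JD * Hᴴ).det.re) := by
  have h1 := hJDopt S_SD hSDfeas.1 hSDfeas.2
  have h2 := hSDopt S_JD hJDfeas.1 hJDfeas.2
  linarith
end

section
/- For any n×n complex Hermitian positive semidefinite matrices A, B, C, the following submodularity-type inequality for log-determinants holds: lndet(I + A + B + C) + lndet(I + C) ≤ lndet(I + A + C) + lndet(I + B + C). Equivalently, lndet(I + A + B + C) − lndet(I + B + C) ≤ lndet(I + A + C) − lndet(I + C); adding interference B to the background noise can only decrease the rate increment contributed by A. -/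
open Matrix
open scoped ComplexOrder

/-! Put `P = 1 + C` and `S = √B`, so that `B = S * S`. The matrix determinant lemma gives
`det (Q + B) = det Q * det (1 + S * Q⁻¹ * S)` for `Q = P` and `Q = P + A`. Inversion is antitone
in the Loewner order, so `S * (P + A)⁻¹ * S ≤ S * P⁻¹ * S`, and the determinant is monotone on
positive definite matrices; hence `det (P + A + B) / det (P + A) ≤ det (P + B) / det P`. -/

namespace Matrix

open scoped MatrixOrder

section RCLike

variable {n 𝕜 : Type*} [Fintype n] [DecidableEq n] [RCLike 𝕜]

lemma PosSemidef.one_le_det_one_add {K : Matrix n n 𝕜} (hK : K.PosSemidef) :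
    1 ≤ (1 + K).det := by
  have hK' : IsSelfAdjoint K := hK.1
  have hcfc : 1 + K = cfc (fun x : ℝ => 1 + x) K := by
    rw [cfc_add .., cfc_const_one .., cfc_id' ..]
  rw [hcfc, hK.1.cfc_eq]
  simp only [IsHermitian.cfc, det_map, det_diagonal, Function.comp_apply, map_add, map_one]
  exact Finset.one_le_prod fun i _ =>
    le_add_of_nonneg_right (RCLike.ofReal_nonneg.mpr (hK.eigenvalues_nonneg i))

lemma det_add_eq_det_mul_det_one_add_sqrt {Q B : Matrix n n 𝕜} (hQ : IsUnit Q.det)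
    (hB : B.PosSemidef) :
    (Q + B).det = Q.det * (1 + CFC.sqrt B * Q⁻¹ * CFC.sqrt B).det := by
  conv_lhs => rw [← CFC.sqrt_mul_sqrt_self B hB.nonneg]
  exact det_add_mul _ _ hQ

lemma PosDef.det_le_det_of_le {M N : Matrix n n 𝕜} (hM : M.PosDef) (hMN : M ≤ N) :
    M.det ≤ N.det := by
  have hK : 0 ≤ CFC.sqrt (N - M) * M⁻¹ * CFC.sqrt (N - M) :=
    conjugate_nonneg_of_nonneg hM.posSemidef.inv.nonneg (CFC.sqrt_nonneg _)
  calc M.det = M.det * 1 := (mul_one _).symm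
    _ ≤ M.det * (1 + CFC.sqrt (N - M) * M⁻¹ * CFC.sqrt (N - M)).det :=
      mul_le_mul_of_nonneg_left (nonneg_iff_posSemidef.mp hK).one_le_det_one_add
        hM.det_pos.le
    _ = N.det := by
      rw [← det_add_eq_det_mul_det_one_add_sqrt hM.det_pos.ne'.isUnit hMN,
        add_sub_cancel]

end RCLike

section Complex

variable {n : Type*} [Fintype n] [DecidableEq n]

open scoped Matrix.Norms.L2Operator in
lemma PosDef.inv_le_inv_of_le {P Q : Matrix n n ℂ} (hP : P.PosDef) (hPQ : P ≤ Q) :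
    Q⁻¹ ≤ P⁻¹ := by
  rw [nonsing_inv_eq_ringInverse, nonsing_inv_eq_ringInverse]
  exact CStarAlgebra.ringInverse_le_ringInverse hPQ (isStrictlyPositive_iff_posDef.mpr hP)

lemma PosDef.det_add_add_mul_det_le {P A B : Matrix n n ℂ} (hP : P.PosDef) (hA : A.PosSemidef)
    (hB : B.PosSemidef) :
    (P + A + B).det * P.det ≤ (P + A).det * (P + B).det := by
  have hPA : (P + A).PosDef := hP.add_posSemidef hA
  set S := CFC.sqrt B
  have hconj : S * (P + A)⁻¹ * S ≤ S * P⁻¹ * S :=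
    conjugate_le_conjugate_of_nonneg (hP.inv_le_inv_of_le (le_add_of_nonneg_right hA.nonneg))
      (CFC.sqrt_nonneg B)
  have hdet : (1 + S * (P + A)⁻¹ * S).det ≤ (1 + S * P⁻¹ * S).det :=
    PosDef.det_le_det_of_le (PosDef.one.add_posSemidef
      (nonneg_iff_posSemidef.mp (conjugate_nonneg_of_nonneg hPA.posSemidef.inv.nonneg
        (CFC.sqrt_nonneg B)))) (by gcongr)
  rw [det_add_eq_det_mul_det_one_add_sqrt hPA.det_pos.ne'.isUnit hB,
    det_add_eq_det_mul_det_one_add_sqrt hP.det_pos.ne'.isUnit hB, mul_right_comm, ← mul_assoc]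
  exact mul_le_mul_of_nonneg_left hdet (mul_pos hPA.det_pos hP.det_pos).le

end Complex

end Matrix

lemma Complex.log_re_add_log_re_le_of_mul_le {a b c d : ℂ} (ha : 0 < a) (hb : 0 < b)
    (hc : 0 < c) (hd : 0 < d) (h : a * b ≤ c * d) :
    Real.log a.re + Real.log b.re ≤ Real.log c.re + Real.log d.re := by
  obtain ⟨ha, ha'⟩ := Complex.pos_iff.mp ha
  obtain ⟨hb, hb'⟩ := Complex.pos_iff.mp hb
  obtain ⟨hc, hc'⟩ := Complex.pos_iff.mp hc
  obtain ⟨hd, hd'⟩ := Complex.pos_iff.mp hd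
  have hre : a.re * b.re ≤ c.re * d.re := by
    simpa [Complex.mul_re, ← ha', ← hb', ← hc', ← hd'] using (Complex.le_def.mp h).1
  rw [← Real.log_mul ha.ne' hb.ne', ← Real.log_mul hc.ne' hd.ne']
  exact Real.log_le_log (mul_pos ha hb) hre

/-- Submodularity of log-determinant: for Hermitian PSD A, B, C,
lndet(I+A+B+C) + lndet(I+C) ≤ lndet(I+A+C) + lndet(I+B+C). -/
theorem lndet_submodular {n : ℕ} (A B C : Matrix (Fin n) (Fin n) ℂ)
    (hA : A.PosSemidef) (hB : B.PosSemidef) (hC : C.PosSemidef) :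
    Real.log ((1 + A + B + C).det.re) + Real.log ((1 + C).det.re) ≤
      Real.log ((1 + A + C).det.re) + Real.log ((1 + B + C).det.re) := by
  have hP : (1 + C).PosDef := PosDef.one.add_posSemidef hC
  have hPA := hP.add_posSemidef hA
  have hPB := hP.add_posSemidef hB
  have hPAB := hPA.add_posSemidef hB
  rw [show 1 + A + B + C = 1 + C + A + B by abel, show 1 + A + C = 1 + C + A by abel,
    show 1 + B + C = 1 + C + B by abel]
  exact Complex.log_re_add_log_re_le_of_mul_le hPAB.det_pos hP.det_pos hPA.det_pos hPB.det_pos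
    (hP.det_add_add_mul_det_le hA hB)
end

section
/- (Proposition 4.1) Fix an integer K ≥ 2; for each user k ∈ {2,…,K} let G_k be an m×m complex Hermitian positive semidefinite matrix (the received covariance H_{k1}S_kH_{k1}ᴴ of user k's signal at user 1's receiver) and r_k ≥ 0 a real rate. Then there exists a decodable user set 𝒰₁* for user 1 such that every decodable user set 𝒰 for user 1 satisfies 𝒰 ⊆ 𝒰₁*. In particular, among all decodable user sets there is exactly one of maximum cardinality (the optimal decodable user set is unique). -/
open Matrix
open scoped ComplexOrder

/-- Definition 4.1: a subset 𝒰 ⊆ {2,…,K} is a decodable user set for user 1 if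
for every nonempty 𝒥 ⊆ 𝒰 the sum rate of 𝒥 does not exceed the corresponding
MAC constraint, treating the users outside 𝒰 as colored Gaussian noise. -/
def IsDecodableUserSet {m : ℕ} (K : ℕ) (G : ℕ → Matrix (Fin m) (Fin m) ℂ)
    (r : ℕ → ℝ) (U : Finset ℕ) : Prop :=
  U ⊆ Finset.Icc 2 K ∧
  ∀ J ⊆ U, J.Nonempty →
    ∑ i ∈ J, r i ≤
      Real.log ((1 + (∑ k ∈ Finset.Icc 2 K \ U, G k) + ∑ i ∈ J, G i).det.re) -
        Real.log ((1 + ∑ k ∈ Finset.Icc 2 K \ U, G k).det.re)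

/-!
Decodability only involves the set function `f A = lndet (I + ∑_{k ∈ A} G_k)`, and `f` is
submodular: for `M` positive definite and `D, C` positive semidefinite, writing `C = S²`,
`det (M + D + C) / det (M + D) = det (I + S (M + D)⁻¹ S) ≤ det (I + S M⁻¹ S) = det (M + C) / det M`,
since inversion is operator antitone and `det` is monotone in the Loewner order.

Submodularity makes the union of two decodable sets `U, V` decodable: split `J ⊆ U ∪ V` into
`J \ U ⊆ V` and `J ∩ U ⊆ U`; decoding `J \ U` first and then `J ∩ U`, each part faces less
interference than in the constraints for `V` resp. `U`, and the marginal gains of `f` can only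
grow. As `∅` is decodable and all decodable sets lie in `{2,…,K}`, the union of all of them is the
greatest decodable set, hence the unique one of maximum cardinality.
-/

open scoped MatrixOrder

theorem Complex.log_re_mul {z w : ℂ} (hz : 0 < z) (hw : 0 < w) :
    Real.log (z * w).re = Real.log z.re + Real.log w.re := by
  obtain ⟨x, hx, rfl⟩ := RCLike.pos_iff_exists_ofReal.1 hz
  obtain ⟨y, hy, rfl⟩ := RCLike.pos_iff_exists_ofReal.1 hw
  simpa using Real.log_mul hx.ne' hy.ne'

namespace Matrix

variable {n : Type*} [Fintype n] [DecidableEq n]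

theorem PosSemidef.one_le_det_one_add_s12 {X : Matrix n n ℂ} (hX : X.PosSemidef) :
    1 ≤ (1 + X).det := by
  have h : 1 + X = cfc (fun x : ℝ => 1 + x) X := by
    rw [cfc_add .., cfc_const_one .., cfc_id' ..]
  rw [h, hX.1.cfc_eq, IsHermitian.cfc]
  simp only [Complex.coe_algebraMap, det_map, det_diagonal, Function.comp_apply,
    Complex.ofReal_add, Complex.ofReal_one]
  norm_cast
  exact Finset.one_le_prod fun i _ => le_add_of_nonneg_right (hX.eigenvalues_nonneg i)

theorem PosDef.det_le_det_of_le_s12 {A B : Matrix n n ℂ} (hA : A.PosDef) (hAB : A ≤ B) :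
    A.det ≤ B.det := by
  set S := CFC.sqrt (B - A)
  have hB : B = A + S * S := by rw [CFC.sqrt_mul_sqrt_self _ (sub_nonneg.2 hAB), add_sub_cancel]
  have hSAS : (S * A⁻¹ * S).PosSemidef :=
    ((CFC.sqrt_nonneg _).isSelfAdjoint.conjugate_nonneg hA.inv.posSemidef.nonneg).posSemidef
  rw [hB, det_add_mul S S hA.det_pos.ne'.isUnit]
  exact le_mul_of_one_le_right hA.det_pos.le hSAS.one_le_det_one_add_s12

open scoped Matrix.Norms.L2Operator in
theorem PosDef.inv_le_inv_of_le_s12 {A B : Matrix n n ℂ} (hA : A.PosDef) (hAB : A ≤ B) :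
    B⁻¹ ≤ A⁻¹ := by
  simpa only [nonsing_inv_eq_ringInverse] using
    CStarAlgebra.ringInverse_le_ringInverse (A := Matrix n n ℂ) hAB hA.isStrictlyPositive

theorem PosDef.det_add_add_mul_det_le_s12 {M D C : Matrix n n ℂ} (hM : M.PosDef)
    (hD : D.PosSemidef) (hC : C.PosSemidef) :
    (M + D + C).det * M.det ≤ (M + C).det * (M + D).det := by
  set S := CFC.sqrt C
  have hS : IsSelfAdjoint S := (CFC.sqrt_nonneg C).isSelfAdjoint
  have hCS : C = S * S := (CFC.sqrt_mul_sqrt_self C hC.nonneg).symm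
  have hMD : (M + D).PosDef := hM.add_posSemidef hD
  have hX : (1 + S * (M + D)⁻¹ * S).PosDef :=
    PosDef.one.add_posSemidef (hS.conjugate_nonneg hMD.inv.posSemidef.nonneg).posSemidef
  have hdet : (1 + S * (M + D)⁻¹ * S).det ≤ (1 + S * M⁻¹ * S).det :=
    hX.det_le_det_of_le_s12 (add_le_add_right (hS.conjugate_le_conjugate
      (hM.inv_le_inv_of_le_s12 (le_add_of_nonneg_right hD.nonneg))) 1)
  rw [hCS, det_add_mul S S hMD.det_pos.ne'.isUnit, det_add_mul S S hM.det_pos.ne'.isUnit]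
  calc (M + D).det * (1 + S * (M + D)⁻¹ * S).det * M.det
      = (M + D).det * M.det * (1 + S * (M + D)⁻¹ * S).det := by ring
    _ ≤ (M + D).det * M.det * (1 + S * M⁻¹ * S).det := by
      gcongr
      exact (mul_pos hMD.det_pos hM.det_pos).le
    _ = M.det * (1 + S * M⁻¹ * S).det * (M + D).det := by ring

theorem PosDef.log_det_add_add_sub_le {M D C : Matrix n n ℂ} (hM : M.PosDef)
    (hD : D.PosSemidef) (hC : C.PosSemidef) :
    Real.log (M + D + C).det.re - Real.log (M + D).det.re ≤
      Real.log (M + C).det.re - Real.log M.det.re := by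
  have hMD := hM.add_posSemidef hD
  have hMDC := hMD.add_posSemidef hC
  rw [sub_le_sub_iff, ← Complex.log_re_mul hMDC.det_pos hM.det_pos,
    ← Complex.log_re_mul (hM.add_posSemidef hC).det_pos hMD.det_pos]
  exact Real.log_le_log (Complex.pos_iff.1 (mul_pos hMDC.det_pos hM.det_pos)).1
    (Complex.le_def.1 (hM.det_add_add_mul_det_le_s12 hD hC)).1

end Matrix

theorem SupClosed.exists_isGreatest_of_forall_subset {α : Type*} [DecidableEq α]
    {s : Set (Finset α)} (S : Finset α) (hs : SupClosed s) (hne : s.Nonempty)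
    (hS : ∀ U ∈ s, U ⊆ S) : ∃ U, IsGreatest s U := by
  classical
  set t := S.powerset.filter (· ∈ s)
  have ht : ∀ {U}, U ∈ t ↔ U ∈ s := fun {U} => by
    simp only [t, Finset.mem_filter, Finset.mem_powerset]
    exact ⟨And.right, fun hU => ⟨hS U hU, hU⟩⟩
  obtain ⟨U, hU⟩ := hne
  exact ⟨t.sup id, hs.finsetSup_mem ⟨U, ht.2 hU⟩ fun V hV => ht.1 hV,
    fun V hV => Finset.le_sup (f := id) (ht.2 hV)⟩

section Decodable

variable {α : Type*} [DecidableEq α]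

def SubmodularOn (S : Finset α) (f : Finset α → ℝ) : Prop :=
  ∀ ⦃A B X : Finset α⦄, A ⊆ B → B ⊆ S → X ⊆ S \ B → f (B ∪ X) - f B ≤ f (A ∪ X) - f A

/-- Definition 4.1 with `A ↦ lndet (I + ∑_{k ∈ A} G_k)` replaced by an arbitrary `f`. -/
def IsDecodable (S : Finset α) (f : Finset α → ℝ) (r : α → ℝ) (U : Finset α) : Prop :=
  U ⊆ S ∧ ∀ J ⊆ U, ∑ i ∈ J, r i ≤ f (S \ U ∪ J) - f (S \ U)

variable {S : Finset α} {f : Finset α → ℝ} {r : α → ℝ} {U V : Finset α}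

theorem isDecodable_empty : IsDecodable S f r ∅ :=
  ⟨Finset.empty_subset S, fun J hJ => by simp [Finset.subset_empty.1 hJ]⟩

theorem IsDecodable.union (hf : SubmodularOn S f) (hU : IsDecodable S f r U)
    (hV : IsDecodable S f r V) : IsDecodable S f r (U ∪ V) := by
  obtain ⟨hUS, hUr⟩ := hU
  obtain ⟨hVS, hVr⟩ := hV
  refine ⟨Finset.union_subset hUS hVS, fun J hJ => ?_⟩
  set N := S \ (U ∪ V)
  have hJV : ∑ i ∈ J \ U, r i ≤ f (N ∪ (J \ U)) - f N :=
    (hVr _ (by grind)).trans (hf (by grind) Finset.sdiff_subset (by grind))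
  have hJU : ∑ i ∈ J ∩ U, r i ≤ f (N ∪ (J \ U) ∪ (J ∩ U)) - f (N ∪ (J \ U)) :=
    (hUr _ Finset.inter_subset_right).trans (hf (by grind) Finset.sdiff_subset (by grind))
  have hN : N ∪ (J \ U) ∪ (J ∩ U) = N ∪ J := by grind
  rw [hN] at hJU
  rw [← Finset.sum_inter_add_sum_sdiff J U]
  linarith

end Decodable

theorem submodularOn_log_det_one_add_sum {ι n : Type*} [DecidableEq ι] [Fintype n]
    [DecidableEq n] {S : Finset ι} {G : ι → Matrix n n ℂ} (hG : ∀ k ∈ S, (G k).PosSemidef) :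
    SubmodularOn S fun A => Real.log (1 + ∑ k ∈ A, G k).det.re := by
  intro A B X hAB hBS hXS
  beta_reduce
  have hsum : ∀ T ⊆ S, (∑ k ∈ T, G k).PosSemidef := fun T hT =>
    posSemidef_sum T fun k hk => hG k (hT hk)
  have hBX : Disjoint B X := Finset.disjoint_of_subset_right hXS Finset.disjoint_sdiff
  rw [Finset.sum_union hBX, Finset.sum_union (hBX.mono_left hAB),
    ← Finset.sum_sdiff hAB, add_comm (∑ k ∈ B \ A, G k)]
  simp only [← add_assoc]
  exact (PosDef.one.add_posSemidef (hsum A (hAB.trans hBS))).log_det_add_add_sub_le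
    (hsum _ (Finset.sdiff_subset.trans hBS)) (hsum X (hXS.trans Finset.sdiff_subset))

theorem isDecodableUserSet_iff {m K : ℕ} {G : ℕ → Matrix (Fin m) (Fin m) ℂ} {r : ℕ → ℝ}
    {U : Finset ℕ} : IsDecodableUserSet K G r U ↔
      IsDecodable (Finset.Icc 2 K) (fun A => Real.log (1 + ∑ k ∈ A, G k).det.re) r U := by
  refine and_congr_right fun _ => forall₂_congr fun J hJ => ?_
  beta_reduce
  rw [Finset.sum_union (Finset.sdiff_disjoint.mono_right hJ), ← add_assoc]
  rcases J.eq_empty_or_nonempty with rfl | hne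
  · simp
  · exact ⟨fun h => h hne, fun h _ => h⟩

theorem optimal_decodable_user_set_unique_general {m : ℕ} (K : ℕ)
    (G : ℕ → Matrix (Fin m) (Fin m) ℂ) (r : ℕ → ℝ)
    (hG : ∀ k ∈ Finset.Icc 2 K, (G k).PosSemidef) :
    ∃ Ustar : Finset ℕ, IsDecodableUserSet K G r Ustar ∧
      (∀ U : Finset ℕ, IsDecodableUserSet K G r U → U ⊆ Ustar) ∧
      (∀ U : Finset ℕ, IsDecodableUserSet K G r U → U.card = Ustar.card →
        U = Ustar) := by
  have hclosed : SupClosed {U | IsDecodableUserSet K G r U} := fun U hU V hV => by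
    simp only [Set.mem_ofPred_eq, isDecodableUserSet_iff] at hU hV ⊢
    exact hU.union (submodularOn_log_det_one_add_sum hG) hV
  obtain ⟨Ustar, hstar, hmax⟩ := hclosed.exists_isGreatest_of_forall_subset (Finset.Icc 2 K)
    ⟨∅, isDecodableUserSet_iff.2 isDecodable_empty⟩ fun U hU => hU.1
  exact ⟨Ustar, hstar, fun U hU => hmax hU,
    fun U hU hcard => Finset.eq_of_subset_of_card_le (hmax hU) hcard.ge⟩

/-- Proposition 4.1: there exists a decodable user set 𝒰₁*
containing every decodable user set; in particular the decodable user set of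
maximum cardinality is unique. -/
theorem optimal_decodable_user_set_unique {m : ℕ} (K : ℕ) (hK : 2 ≤ K)
    (G : ℕ → Matrix (Fin m) (Fin m) ℂ) (r : ℕ → ℝ)
    (hG : ∀ k ∈ Finset.Icc 2 K, (G k).PosSemidef) (hr : ∀ k, 0 ≤ r k) :
    ∃ Ustar : Finset ℕ, IsDecodableUserSet K G r Ustar ∧
      (∀ U : Finset ℕ, IsDecodableUserSet K G r U → U ⊆ Ustar) ∧
      (∀ U : Finset ℕ, IsDecodableUserSet K G r U → U.card = Ustar.card →
        U = Ustar) :=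
  optimal_decodable_user_set_unique_general K G r hG
end

section
/- (Water-filling MIMO capacity) Let H be an M×N complex matrix, let λ₁, …, λ_N ≥ 0 be the eigenvalues (with multiplicity) of the Hermitian PSD matrix HᴴH with corresponding orthonormal eigenvectors v₁, …, v_N, let P > 0, and let μ > 0 be such that the water-filling powers p_i := max(μ − 1/λ_i, 0) for λ_i > 0 and p_i := 0 for λ_i = 0 satisfy Σ_{i=1}^N p_i = P. Then: (i) for every N×N complex Hermitian PSD matrix S with trace(S) ≤ P, lndet(I_M + H S Hᴴ) ≤ Σ_{i=1}^N log(1 + λ_i p_i); and (ii) the matrix S* := Σ_{i=1}^N p_i v_i v_iᴴ is Hermitian PSD with trace(S*) = P and achieves lndet(I_M + H S* Hᴴ) = Σ_{i=1}^N log(1 + λ_i p_i). Hence the maximum transmit rate under the power constraint equals Σ_i log(1 + λ_i p_i), attained by transmitting along the right singular vectors of H with water-filling power allocation. -/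
open Matrix
open scoped ComplexOrder

/-!
Write `HᴴH = U Λ Uᴴ` with `U` the unitary whose columns are the `vᵢ`. Sylvester's identity
`det (1 + X Y) = det (1 + Y X)` turns `det (1 + H S Hᴴ)` into `det (1 + Λ^½ T Λ^½)` with
`T = Uᴴ S U`, a PSD matrix with the trace of `S`. Hadamard's inequality bounds this determinant by
the product of the diagonal entries `1 + λᵢ Tᵢᵢ`, so only the power allocation `q = diag T`
matters, and for allocations concavity of `log` together with the water-filling condition shows
that `p` is optimal. For `S* = U diag(p) Uᴴ` the matrix `T` is `diag(p)`, so the bound is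
attained.
-/

open RCLike

namespace Matrix

variable {R m n k : Type*} [Fintype k]

theorem det_one_add_mul_mul_conjTranspose_eq [CommRing R] [StarRing R] [Fintype m] [Fintype n]
    [DecidableEq m] [DecidableEq n] [DecidableEq k] {H : Matrix m n R} {U : Matrix n k R}
    {D : Matrix k k R} (hA : Hᴴ * H = U * D * Uᴴ) (S : Matrix n n R) :
    (1 + H * S * Hᴴ).det = (1 + D * (Uᴴ * S * U)).det := by
  rw [det_one_add_mul_comm, ← Matrix.mul_assoc, hA, Matrix.mul_assoc, Matrix.mul_assoc,
    det_one_add_mul_comm]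
  simp only [Matrix.mul_assoc]

theorem det_one_add_mul_mul_conjTranspose_eq_prod [CommRing R] [StarRing R] [Fintype m]
    [Fintype n] [DecidableEq m] [DecidableEq n] [DecidableEq k] {H : Matrix m n R}
    {U : Matrix n k R} (hU : Uᴴ * U = 1) {d : k → R} (hA : Hᴴ * H = U * diagonal d * Uᴴ)
    (c : k → R) : (1 + H * (U * diagonal c * Uᴴ) * Hᴴ).det = ∏ i, (1 + d i * c i) := by
  have hconj : Uᴴ * (U * diagonal c * Uᴴ) * U = diagonal c :=
    calc Uᴴ * (U * diagonal c * Uᴴ) * U = Uᴴ * U * diagonal c * (Uᴴ * U) := by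
          simp only [Matrix.mul_assoc]
      _ = diagonal c := by rw [hU, Matrix.one_mul, Matrix.mul_one]
  rw [det_one_add_mul_mul_conjTranspose_eq hA, hconj, diagonal_mul_diagonal, ← diagonal_one,
    diagonal_add, det_diagonal]

theorem mul_transpose_of_eq_of_mulVec_eq_smul [CommSemiring R] [Fintype n] [DecidableEq k]
    {A : Matrix n n R} {v : k → n → R} {c : k → R} (h : ∀ i, A *ᵥ v i = c i • v i) :
    A * (of v)ᵀ = (of v)ᵀ * diagonal c := by
  ext x i
  rw [mul_diagonal]
  simpa [mulVec, dotProduct, mul_apply, mul_comm (v i x)] using congrFun (h i) x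

theorem sum_smul_vecMulVec_star_eq [CommSemiring R] [StarRing R] [DecidableEq k]
    (v : k → n → R) (c : k → R) :
    ∑ i, c i • vecMulVec (v i) (star (v i)) = (of v)ᵀ * diagonal c * ((of v)ᵀ)ᴴ := by
  ext x y
  rw [mul_apply]
  simp [sum_apply, mul_diagonal, vecMulVec_apply, mul_left_comm, mul_assoc]

end Matrix

theorem Real.prod_le_one_of_sum_le_card {ι : Type*} [Fintype ι] {g : ι → ℝ}
    (hg : ∀ i, 0 ≤ g i) (hsum : ∑ i, g i ≤ Fintype.card ι) : ∏ i, g i ≤ 1 :=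
  calc ∏ i, g i ≤ ∏ i, Real.exp (g i - 1) :=
        Finset.prod_le_prod (fun i _ ↦ hg i) fun i _ ↦ by
          linarith [Real.add_one_le_exp (g i - 1)]
    _ = Real.exp (∑ i, g i - Fintype.card ι) := by
        rw [← Real.exp_sum, Finset.sum_sub_distrib]; simp
    _ ≤ 1 := Real.exp_le_one_iff.mpr (by linarith)

namespace Matrix

variable {𝕜 : Type*} [RCLike 𝕜] {n : Type*} [Fintype n] [DecidableEq n]

theorem PosSemidef.re_det_le_one_of_diag_eq_one {A : Matrix n n 𝕜} (hA : A.PosSemidef)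
    (hdiag : ∀ i, A i i = 1) : re A.det ≤ 1 := by
  have htrace : ∑ i, hA.1.eigenvalues i = Fintype.card n := by
    have := hA.1.trace_eq_sum_eigenvalues
    simp only [trace, diag, hdiag, Finset.sum_const, Finset.card_univ, nsmul_eq_mul,
      mul_one] at this
    exact_mod_cast this.symm
  rw [hA.1.det_eq_prod_eigenvalues, ← ofReal_prod, ofReal_re]
  exact Real.prod_le_one_of_sum_le_card hA.eigenvalues_nonneg htrace.le

theorem PosDef.re_det_le_prod_re_diag {A : Matrix n n 𝕜} (hA : A.PosDef) :
    re A.det ≤ ∏ i, re (A i i) := by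
  set d : n → ℝ := fun i ↦ re (A i i)
  have hd : ∀ i, 0 < d i := fun i ↦ (RCLike.pos_iff.mp hA.diag_pos).1
  set E : Matrix n n 𝕜 := diagonal fun i ↦ (((√(d i))⁻¹ : ℝ) : 𝕜)
  have hE : Eᴴ = E := by simp [E, diagonal_conjTranspose]
  have hC : (E * A * E).PosSemidef := by
    simpa [hE] using hA.posSemidef.mul_mul_conjTranspose_same E
  have hsq : ∀ i, (√(d i))⁻¹ * (√(d i))⁻¹ * d i = 1 := fun i ↦ by
    rw [← mul_inv, Real.mul_self_sqrt (hd i).le, inv_mul_cancel₀ (hd i).ne']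
  have hCdiag : ∀ i, (E * A * E) i i = 1 := by
    intro i
    rw [mul_diagonal, diagonal_mul, ← hA.1.coe_re_apply_self i, ← ofReal_mul, ← ofReal_mul,
      mul_right_comm]
    exact_mod_cast hsq i
  have hdet : A.det = (E * A * E).det * ∏ i, (d i : 𝕜) := by
    have hEd : E.det * E.det * ∏ i, (d i : 𝕜) = 1 := by
      simp only [E, det_diagonal, ← Finset.prod_mul_distrib, ← ofReal_mul, ← ofReal_prod]
      simp [hsq]
    rw [det_mul, det_mul]
    linear_combination -A.det * hEd
  rw [hdet, ← ofReal_prod, re_mul_ofReal]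
  exact mul_le_of_le_one_left (Finset.prod_nonneg fun i _ ↦ (hd i).le)
    (hC.re_det_le_one_of_diag_eq_one hCdiag)

theorem PosSemidef.log_re_det_one_add_diagonal_mul_le {d : n → ℝ} (hd : ∀ i, 0 ≤ d i)
    {T : Matrix n n 𝕜} (hT : T.PosSemidef) :
    Real.log (re (1 + diagonal (fun i ↦ (d i : 𝕜)) * T).det)
      ≤ ∑ i, Real.log (1 + d i * re (T i i)) := by
  set R : Matrix n n 𝕜 := diagonal fun i ↦ ((√(d i) : ℝ) : 𝕜)
  have hRR : diagonal (fun i ↦ (d i : 𝕜)) = R * R := by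
    simp only [R, diagonal_mul_diagonal, ← ofReal_mul, Real.mul_self_sqrt (hd _)]
  have hB : (1 + R * T * R).PosDef := by
    have hR : Rᴴ = R := by simp [R, diagonal_conjTranspose]
    exact PosDef.one.add_posSemidef (by simpa [hR] using hT.mul_mul_conjTranspose_same R)
  have hBdiag : ∀ i, re ((1 + R * T * R) i i) = 1 + d i * re (T i i) := fun i ↦ by
    rw [add_apply, one_apply_eq, mul_diagonal, diagonal_mul, ← hT.1.coe_re_apply_self i,
      ← ofReal_mul, ← ofReal_mul, ← ofReal_one, ← ofReal_add, ofReal_re,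
      mul_right_comm, Real.mul_self_sqrt (hd i), ofReal_re]
  rw [hRR, mul_assoc, det_one_add_mul_comm,
    ← Real.log_prod fun i _ ↦ by rw [← hBdiag]; exact (RCLike.pos_iff.mp hB.diag_pos).1.ne']
  refine Real.log_le_log (RCLike.pos_iff.mp hB.det_pos).1 ?_
  simpa only [hBdiag] using hB.re_det_le_prod_re_diag

end Matrix

section Waterfilling

variable {μ : ℝ}

theorem waterfilling_nonneg {l p : ℝ} (hl : 0 ≤ l) (hp_pos : 0 < l → p = max (μ - 1 / l) 0)
    (hp_zero : l = 0 → p = 0) : 0 ≤ p := by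
  rcases hl.eq_or_lt with h | h
  · exact (hp_zero h.symm).ge
  · exact hp_pos h ▸ le_max_right _ _

/-- The Lagrangian bound behind water-filling: at the water level `μ` the marginal rate
`l / (1 + l * p)` is exactly `1 / μ` where power is allocated and at most `1 / μ` elsewhere. -/
theorem log_one_add_mul_le_waterfilling (hμ : 0 < μ) {l p q : ℝ} (hl : 0 ≤ l) (hq : 0 ≤ q)
    (hp_pos : 0 < l → p = max (μ - 1 / l) 0) (hp_zero : l = 0 → p = 0) :
    Real.log (1 + l * q) ≤ Real.log (1 + l * p) + (q - p) / μ := by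
  have hp := waterfilling_nonneg hl hp_pos hp_zero
  have hlp : 0 < 1 + l * p := by positivity
  have tangent : Real.log (1 + l * q) ≤ Real.log (1 + l * p) + l * (q - p) / (1 + l * p) := by
    have := Real.log_le_sub_one_of_pos (show 0 < (1 + l * q) / (1 + l * p) by positivity)
    rw [Real.log_div (by positivity) hlp.ne'] at this
    have : (1 + l * q) / (1 + l * p) - 1 = l * (q - p) / (1 + l * p) := by field_simp; ring
    linarith
  suffices l * (q - p) / (1 + l * p) ≤ (q - p) / μ by linarith
  rcases hl.eq_or_lt with rfl | hl
  · simp [hp_zero rfl]; positivity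
  rcases le_or_gt (μ - 1 / l) 0 with hlow | hhigh
  · have hp0 : p = 0 := by rw [hp_pos hl, max_eq_right hlow]
    have : l * μ ≤ 1 := by rw [sub_nonpos, le_div_iff₀ hl] at hlow; linarith
    rw [hp0, sub_zero, mul_zero, add_zero, div_one, le_div_iff₀ hμ]
    nlinarith
  · have hpμ : p = μ - 1 / l := by rw [hp_pos hl, max_eq_left hhigh.le]
    have : 1 + l * p = l * μ := by rw [hpμ]; field_simp; ring
    rw [this, mul_div_mul_left _ _ hl.ne']

theorem sum_log_one_add_mul_le_waterfilling {ι : Type*} [Fintype ι] (hμ : 0 < μ)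
    {l p q : ι → ℝ} (hl : ∀ i, 0 ≤ l i) (hq : ∀ i, 0 ≤ q i)
    (hp_pos : ∀ i, 0 < l i → p i = max (μ - 1 / l i) 0) (hp_zero : ∀ i, l i = 0 → p i = 0)
    (hqp : ∑ i, q i ≤ ∑ i, p i) :
    ∑ i, Real.log (1 + l i * q i) ≤ ∑ i, Real.log (1 + l i * p i) :=
  calc ∑ i, Real.log (1 + l i * q i)
      ≤ ∑ i, (Real.log (1 + l i * p i) + (q i - p i) / μ) :=
        Finset.sum_le_sum fun i _ ↦
          log_one_add_mul_le_waterfilling hμ (hl i) (hq i) (hp_pos i) (hp_zero i)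
    _ = ∑ i, Real.log (1 + l i * p i) + (∑ i, q i - ∑ i, p i) / μ := by
        rw [Finset.sum_add_distrib, ← Finset.sum_div, Finset.sum_sub_distrib]
    _ ≤ ∑ i, Real.log (1 + l i * p i) := by
        have : (∑ i, q i - ∑ i, p i) / μ ≤ 0 := div_nonpos_of_nonpos_of_nonneg (by linarith) hμ.le
        linarith

end Waterfilling

theorem log_re_det_one_add_mul_mul_conjTranspose_le_waterfilling {𝕜 m n : Type*} [RCLike 𝕜]
    [Fintype m] [DecidableEq m] [Fintype n] [DecidableEq n] {μ : ℝ} (hμ : 0 < μ)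
    {lam p : n → ℝ} (hlam : ∀ i, 0 ≤ lam i)
    (hp_pos : ∀ i, 0 < lam i → p i = max (μ - 1 / lam i) 0)
    (hp_zero : ∀ i, lam i = 0 → p i = 0) {H : Matrix m n 𝕜} {U : Matrix n n 𝕜}
    (hU : U * Uᴴ = 1) (hA : Hᴴ * H = U * diagonal (fun i ↦ (lam i : 𝕜)) * Uᴴ)
    {S : Matrix n n 𝕜} (hS : S.PosSemidef) (htr : re S.trace ≤ ∑ i, p i) :
    Real.log (re (1 + H * S * Hᴴ).det) ≤ ∑ i, Real.log (1 + lam i * p i) := by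
  have hT := hS.conjTranspose_mul_mul_same U
  have htrace : ∑ i, re ((Uᴴ * S * U) i i) = re S.trace :=
    calc ∑ i, re ((Uᴴ * S * U) i i) = re (Uᴴ * S * U).trace := by simp [trace]
      _ = re S.trace := by rw [trace_mul_cycle, hU, Matrix.one_mul]
  rw [det_one_add_mul_mul_conjTranspose_eq hA]
  exact (hT.log_re_det_one_add_diagonal_mul_le hlam).trans <|
    sum_log_one_add_mul_le_waterfilling hμ hlam
      (fun i ↦ (RCLike.nonneg_iff.mp hT.diag_nonneg).1) hp_pos hp_zero (htrace ▸ htr)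

theorem waterfilling_capacity_general {M N : ℕ} (H : Matrix (Fin M) (Fin N) ℂ)
    (lam : Fin N → ℝ) (v : Fin N → (Fin N → ℂ)) (P μ : ℝ)
    (hlam : ∀ i, 0 ≤ lam i)
    (heig : ∀ i, (Hᴴ * H) *ᵥ (v i) = (lam i : ℂ) • v i)
    (hortho : ∀ i j, ∑ x, (starRingEnd ℂ) (v i x) * v j x
      = if i = j then (1 : ℂ) else 0)
    (hμ : 0 < μ)
    (p : Fin N → ℝ)
    (hp_pos : ∀ i, 0 < lam i → p i = max (μ - 1 / lam i) 0)
    (hp_zero : ∀ i, lam i = 0 → p i = 0)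
    (hsum : ∑ i, p i = P) :
    (∀ S : Matrix (Fin N) (Fin N) ℂ, S.PosSemidef → S.trace.re ≤ P →
        Real.log ((1 + H * S * Hᴴ).det.re) ≤ ∑ i, Real.log (1 + lam i * p i)) ∧
    (let Sstar : Matrix (Fin N) (Fin N) ℂ :=
      ∑ i, (p i : ℂ) • Matrix.vecMulVec (v i) (star (v i))
     Sstar.PosSemidef ∧ Sstar.trace = (P : ℂ) ∧
        Real.log ((1 + H * Sstar * Hᴴ).det.re) = ∑ i, Real.log (1 + lam i * p i)) := by
  set U : Matrix (Fin N) (Fin N) ℂ := (of v)ᵀ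
  have hUU : Uᴴ * U = 1 := by
    ext i j
    simpa [U, mul_apply, one_apply] using hortho i j
  have hUU' : U * Uᴴ = 1 := mul_eq_one_comm.mp hUU
  have hA : Hᴴ * H = U * diagonal (fun i ↦ (lam i : ℂ)) * Uᴴ := by
    rw [← mul_transpose_of_eq_of_mulVec_eq_smul heig, Matrix.mul_assoc, hUU', Matrix.mul_one]
  refine ⟨fun S hS htr ↦ log_re_det_one_add_mul_mul_conjTranspose_le_waterfilling hμ hlam
    hp_pos hp_zero hUU' hA hS (htr.trans hsum.ge), ?_⟩
  intro Sstar
  have hp := fun i ↦ waterfilling_nonneg (hlam i) (hp_pos i) (hp_zero i)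
  rw [show Sstar = U * diagonal (fun i ↦ (p i : ℂ)) * Uᴴ from sum_smul_vecMulVec_star_eq _ _]
  refine ⟨(posSemidef_diagonal_iff.mpr fun i ↦ Complex.zero_le_real.mpr (hp i))
    |>.mul_mul_conjTranspose_same U, ?_, ?_⟩
  · rw [trace_mul_cycle, hUU, Matrix.one_mul, trace_diagonal, ← hsum, Complex.ofReal_sum]
  · rw [det_one_add_mul_mul_conjTranspose_eq_prod hUU hA]
    norm_cast
    exact Real.log_prod fun i _ ↦ (by nlinarith [hlam i, hp i] : 0 < 1 + lam i * p i).ne'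

/-- Water-filling MIMO capacity: with λᵢ, vᵢ the eigenvalues and
orthonormal eigenvectors of HᴴH and water-filling powers pᵢ summing to P:
(i) every PSD S with tr(S) ≤ P satisfies lndet(I + HSHᴴ) ≤ Σᵢ log(1 + λᵢpᵢ);
(ii) S* = Σᵢ pᵢ vᵢvᵢᴴ is PSD with tr(S*) = P and achieves this bound. -/
theorem waterfilling_capacity {M N : ℕ} (H : Matrix (Fin M) (Fin N) ℂ)
    (lam : Fin N → ℝ) (v : Fin N → (Fin N → ℂ)) (P μ : ℝ)
    (hlam : ∀ i, 0 ≤ lam i)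
    (heig : ∀ i, (Hᴴ * H) *ᵥ (v i) = (lam i : ℂ) • v i)
    (hortho : ∀ i j, ∑ x, (starRingEnd ℂ) (v i x) * v j x
      = if i = j then (1 : ℂ) else 0)
    (hP : 0 < P) (hμ : 0 < μ)
    (p : Fin N → ℝ)
    (hp_pos : ∀ i, 0 < lam i → p i = max (μ - 1 / lam i) 0)
    (hp_zero : ∀ i, lam i = 0 → p i = 0)
    (hsum : ∑ i, p i = P) :
    (∀ S : Matrix (Fin N) (Fin N) ℂ, S.PosSemidef → S.trace.re ≤ P →
        Real.log ((1 + H * S * Hᴴ).det.re) ≤ ∑ i, Real.log (1 + lam i * p i)) ∧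
    (let Sstar : Matrix (Fin N) (Fin N) ℂ :=
      ∑ i, (p i : ℂ) • Matrix.vecMulVec (v i) (star (v i))
     Sstar.PosSemidef ∧ Sstar.trace = (P : ℂ) ∧
        Real.log ((1 + H * Sstar * Hᴴ).det.re) = ∑ i, Real.log (1 + lam i * p i)) :=
  waterfilling_capacity_general H lam v P μ hlam heig hortho hμ p hp_pos hp_zero hsum
end
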